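/- arXiv:1107.4775 — 3 statements merged into one kernel-verified Lean document; each statement's English description precedes it below -/
import Mathlib

section
/- Let d ≥ 1 and 1 ≤ k ≤ d. If n·r_n^d → 0 and n^{k+1} r_n^{dk} → 0 as n → ∞, then N_{k,n} converges to 0 in L², i.e., lim_{n→∞} E[N_{k,n}²] = 0. -/
open MeasureTheory ProbabilityTheory Filter Finset Metric
open scoped ENNReal NNReal Topology Classical

noncomputable section

/-- The circumcenter of a `(k+1)`-tuple of points in `ℝ^d` (the unique point of the affine
span equidistant from all points), or `0` if the points are affinely dependent. -/
def circC {d k : ℕ} (y : Fin (k + 1) → EuclideanSpace ℝ (Fin d)) :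
    EuclideanSpace ℝ (Fin d) :=
  if h : AffineIndependent ℝ y then
    (⟨y, h⟩ : Affine.Simplex ℝ (EuclideanSpace ℝ (Fin d)) k).circumcenter
  else 0

/-- The circumradius of a `(k+1)`-tuple, or `0` if the points are affinely dependent. -/
def circR {d k : ℕ} (y : Fin (k + 1) → EuclideanSpace ℝ (Fin d)) : ℝ :=
  if h : AffineIndependent ℝ y then
    (⟨y, h⟩ : Affine.Simplex ℝ (EuclideanSpace ℝ (Fin d)) k).circumradius
  else 0

/-- The condition `h(Y) = 1`: the points are affinely independent (in general position) and
the circumcenter lies in the relative interior of their convex hull. -/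
def hCond {d k : ℕ} (y : Fin (k + 1) → EuclideanSpace ℝ (Fin d)) : Prop :=
  AffineIndependent ℝ y ∧
    circC y ∈ intrinsicInterior ℝ (convexHull ℝ (Set.range y))

/-- The condition `h_ε(Y) = 1`: `h(Y) = 1` together with `R(Y) ≤ ε`. -/
def hEpsCond {d k : ℕ} (ε : ℝ) (y : Fin (k + 1) → EuclideanSpace ℝ (Fin d)) : Prop :=
  hCond y ∧ circR y ≤ ε

/-- The condition `g_ε(Y, P) = 1`: `h_ε(Y) = 1` and the open ball `B(Y)` contains no
point of `P`. -/
def gEpsCond {d k : ℕ} (ε : ℝ) (y : Fin (k + 1) → EuclideanSpace ℝ (Fin d))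
    (P : Set (EuclideanSpace ℝ (Fin d))) : Prop :=
  hEpsCond ε y ∧ P ∩ Metric.ball (circC y) (circR y) = ∅

/-- The `(k+1)`-tuple of points associated to a `(k+1)`-element subset `s` of indices
(listed in increasing order); junk value if `s.card ≠ k + 1`. -/
def tupleOf {d : ℕ} {n : ℕ} (X : Fin n → EuclideanSpace ℝ (Fin d)) (k : ℕ)
    (s : Finset (Fin n)) : Fin (k + 1) → EuclideanSpace ℝ (Fin d) :=
  if hs : s.card = k + 1 then fun i => X ((s.orderIsoOfFin hs i : Fin n)) else fun _ => 0

/-- `N_{k,n}`: the number of index-`k` critical points of the distance function of the point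
set `{X 0, …, X (n-1)}` lying at distance at most `r` from the point set. -/
def critCount (d k n : ℕ) (r : ℝ) (X : Fin n → EuclideanSpace ℝ (Fin d)) : ℕ :=
  ((Finset.powersetCard (k + 1) (Finset.univ : Finset (Fin n))).filter fun s =>
    gEpsCond r (tupleOf X k s) (Set.range X)).card

/-- `ω_d`, the Lebesgue volume of the unit ball in `ℝ^d`. -/
def unitBallVol (d : ℕ) : ℝ :=
  (volume (Metric.ball (0 : EuclideanSpace ℝ (Fin d)) 1)).toReal

/-- The constant `μ_k`. -/
def muK (d k : ℕ) (f : EuclideanSpace ℝ (Fin d) → ℝ) : ℝ :=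
  ((Nat.factorial (k + 1) : ℝ))⁻¹ * (∫ x, f x ^ (k + 1)) *
    ∫ y : Fin k → EuclideanSpace ℝ (Fin d),
      (if hEpsCond 1 (Fin.cons 0 y) then (1 : ℝ) else 0)


/-! Every counted tuple lies on its circumsphere, of radius at most `r`, so its points are pairwise
within `2r`; hence `N²` is at most the number of pairs `(s, t)` of `(k+1)`-sets that are both
`2r`-clusters. If `s` and `t` share `j` points, their union has `2k + 2 - j` points, all but one
anchor per connected piece lying within `2r` of that anchor, so by independence and the bounded
density the pair occurs with probability `O(r^(d e))`, `e = pairExponent k j`. There are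
`O(n^(2k+2-j))` such pairs, and `n^(2k+2-j) r^(d e)` is `(n^(k+1) r^(dk))²` for `j = 0` and
`(n^(k+1) r^(dk)) (n r^d)^(k+1-j)` otherwise. -/

/-- Integrating out the free coordinates (those outside `C`) last, each constrained coordinate
contributes a factor `c`. -/
theorem measure_pi_setOf_dist_anchor_le {ι E : Type*} [Fintype ι] [MeasurableSpace E]
    [PseudoMetricSpace E] [OpensMeasurableSpace E] [SecondCountableTopology E]
    (μ : Measure E) [IsProbabilityMeasure μ]
    (C : Finset ι) {a : ι → ι} (ha : ∀ i ∈ C, a i ∉ C) {ρ : ℝ} {c : ℝ≥0∞}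
    (hc : ∀ x, μ (closedBall x ρ) ≤ c) :
    Measure.pi (fun _ : ι => μ) {x | ∀ i ∈ C, dist (x i) (x (a i)) ≤ ρ} ≤ c ^ #C := by
  let T : Set ((∀ _ : {i // i ∈ C}, E) × (∀ _ : {i // i ∉ C}, E)) :=
    {q | ∀ i : {i // i ∈ C}, dist (q.1 i) (q.2 ⟨a i, ha i i.2⟩) ≤ ρ}
  have hT : MeasurableSet T := by
    simp only [T, Set.ofPred_forall]
    exact .iInter fun i => measurableSet_le
      ((measurable_pi_apply _).comp measurable_fst |>.dist
        ((measurable_pi_apply _).comp measurable_snd)) measurable_const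
  have hpre : {x : ι → E | ∀ i ∈ C, dist (x i) (x (a i)) ≤ ρ} =
      MeasurableEquiv.piEquivPiSubtypeProd (fun _ : ι => E) (· ∈ C) ⁻¹' T := by
    ext x
    exact ⟨fun h i => h i i.2, fun h i hi => h ⟨i, hi⟩⟩
  rw [hpre, (measurePreserving_piEquivPiSubtypeProd (fun _ : ι => μ) (· ∈ C)).measure_preimage
    hT.nullMeasurableSet, Measure.prod_apply_symm hT]
  refine (lintegral_mono (g := fun _ => c ^ #C) fun y => ?_).trans (by simp)
  have hfiber : (fun x => (x, y)) ⁻¹' T =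
      Set.univ.pi fun i : {i // i ∈ C} => closedBall (y ⟨a i, ha i i.2⟩) ρ := by
    ext x
    simp [T, Set.mem_pi, mem_closedBall]
  -- the factor `Measure.pi` produced by `piEquivPiSubtypeProd` uses the `Subtype.fintype` instance
  rw [hfiber, @Measure.pi_pi _ _ (Subtype.fintype _)]
  exact (Finset.prod_le_pow_card _ _ _ fun i _ => hc _).trans_eq (by simp)

theorem ProbabilityTheory.iIndepFun.measure_setOf_dist_anchor_le {ι Ω E : Type*} [Fintype ι]
    [MeasurableSpace Ω] [MeasurableSpace E] [PseudoMetricSpace E] [OpensMeasurableSpace E]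
    [SecondCountableTopology E] {P : Measure Ω} [IsProbabilityMeasure P] {μ : Measure E}
    [IsProbabilityMeasure μ] {X : ι → Ω → E} (hX_meas : ∀ i, Measurable (X i))
    (hX_indep : iIndepFun X P) (hX_law : ∀ i, P.map (X i) = μ)
    (C : Finset ι) {a : ι → ι} (ha : ∀ i ∈ C, a i ∉ C) {ρ : ℝ} {c : ℝ≥0∞}
    (hc : ∀ x, μ (closedBall x ρ) ≤ c) :
    P {ω | ∀ i ∈ C, dist (X i ω) (X (a i) ω) ≤ ρ} ≤ c ^ #C := by
  have hS : MeasurableSet {x : ι → E | ∀ i ∈ C, dist (x i) (x (a i)) ≤ ρ} := by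
    simp only [Set.ofPred_forall]
    exact .iInter fun i => .iInter fun _ =>
      measurableSet_le ((measurable_pi_apply _).dist (measurable_pi_apply _)) measurable_const
  have hlaw : P.map (fun ω i => X i ω) = Measure.pi fun _ => μ := by
    rw [hX_indep.map_fun_eq_pi_map fun i => (hX_meas i).aemeasurable]
    simp only [hX_law]
  calc P {ω | ∀ i ∈ C, dist (X i ω) (X (a i) ω) ≤ ρ}
      = P.map (fun ω i => X i ω) {x | ∀ i ∈ C, dist (x i) (x (a i)) ≤ ρ} :=
        (Measure.map_apply (measurable_pi_lambda _ hX_meas) hS).symm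
    _ ≤ c ^ #C := hlaw ▸ measure_pi_setOf_dist_anchor_le μ C ha hc

def IsCluster {ι E : Type*} [PseudoMetricSpace E] (ρ : ℝ) (y : ι → E) (s : Finset ι) : Prop :=
  ∀ i ∈ s, ∀ j ∈ s, dist (y i) (y j) ≤ ρ

/-- Two clusters of `k + 1` points sharing `j` of them consist of `2k + 2 - j` points; all but one
anchor per connected piece (two pieces if `j = 0`, one otherwise) are within `ρ` of their anchor. -/
def pairExponent (k j : ℕ) : ℕ := if j = 0 then 2 * k else 2 * k + 1 - j

section Anchors

variable {ι E : Type*} [DecidableEq ι] [PseudoMetricSpace E] {k : ℕ} {s t : Finset ι}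

theorem exists_anchor_of_inter_nonempty (hs : #s = k + 1) (ht : #t = k + 1)
    (hst : (s ∩ t).Nonempty) :
    ∃ (C : Finset ι) (a : ι → ι), #C = pairExponent k #(s ∩ t) ∧ (∀ i ∈ C, a i ∉ C) ∧
      ∀ (ρ : ℝ) (y : ι → E), IsCluster ρ y s → IsCluster ρ y t →
        ∀ i ∈ C, dist (y i) (y (a i)) ≤ ρ := by
  obtain ⟨z, hz⟩ := hst
  rw [mem_inter] at hz
  refine ⟨(s ∪ t).erase z, fun _ => z, ?_, fun i _ => notMem_erase z _, ?_⟩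
  · have hzst : z ∈ s ∪ t := mem_union_left t hz.1
    have hj : #(s ∩ t) ≠ 0 := (card_pos.2 ⟨z, mem_inter.2 hz⟩).ne'
    have := card_union_add_card_inter s t
    rw [card_erase_of_mem hzst, pairExponent, if_neg hj]
    omega
  · intro ρ y hys hyt i hi
    rcases mem_union.1 (mem_of_mem_erase hi) with his | hit
    · exact hys i his z hz.1
    · exact hyt i hit z hz.2

theorem exists_anchor_of_disjoint (hs : #s = k + 1) (ht : #t = k + 1) (hst : Disjoint s t) :
    ∃ (C : Finset ι) (a : ι → ι), #C = pairExponent k #(s ∩ t) ∧ (∀ i ∈ C, a i ∉ C) ∧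
      ∀ (ρ : ℝ) (y : ι → E), IsCluster ρ y s → IsCluster ρ y t →
        ∀ i ∈ C, dist (y i) (y (a i)) ≤ ρ := by
  obtain ⟨z₁, hz₁⟩ : s.Nonempty := card_pos.1 (by omega)
  obtain ⟨z₂, hz₂⟩ : t.Nonempty := card_pos.1 (by omega)
  have hz₁t : z₁ ∉ t := disjoint_left.1 hst hz₁
  have hz₂s : z₂ ∉ s := disjoint_right.1 hst hz₂
  refine ⟨s.erase z₁ ∪ t.erase z₂, fun i => if i ∈ s then z₁ else z₂, ?_, ?_, ?_⟩
  · rw [card_union_of_disjoint (hst.mono (erase_subset _ _) (erase_subset _ _)),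
      card_erase_of_mem hz₁, card_erase_of_mem hz₂, disjoint_iff_inter_eq_empty.1 hst,
      card_empty, pairExponent, if_pos rfl]
    omega
  · intro i _
    by_cases his : i ∈ s <;> simp [his, hz₁t, hz₂s]
  · intro ρ y hys hyt i hi
    by_cases his : i ∈ s
    · simpa only [if_pos his] using hys i his z₁ hz₁
    · have hit : i ∈ t := by
        rcases mem_union.1 hi with h | h
        · exact absurd (mem_of_mem_erase h) his
        · exact mem_of_mem_erase h
      simpa only [if_neg his] using hyt i hit z₂ hz₂

theorem exists_anchor_of_card_eq (hs : #s = k + 1) (ht : #t = k + 1) :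
    ∃ (C : Finset ι) (a : ι → ι), #C = pairExponent k #(s ∩ t) ∧ (∀ i ∈ C, a i ∉ C) ∧
      ∀ (ρ : ℝ) (y : ι → E), IsCluster ρ y s → IsCluster ρ y t →
        ∀ i ∈ C, dist (y i) (y (a i)) ≤ ρ := by
  rcases (s ∩ t).eq_empty_or_nonempty with hst | hst
  · exact exists_anchor_of_disjoint hs ht (disjoint_iff_inter_eq_empty.2 hst)
  · exact exists_anchor_of_inter_nonempty hs ht hst

end Anchors

theorem ProbabilityTheory.iIndepFun.measure_isCluster_inter_le {ι Ω E : Type*} [Fintype ι]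
    [DecidableEq ι] [MeasurableSpace Ω] [MeasurableSpace E] [PseudoMetricSpace E]
    [OpensMeasurableSpace E] [SecondCountableTopology E] {P : Measure Ω} [IsProbabilityMeasure P] {μ : Measure E}
    [IsProbabilityMeasure μ] {X : ι → Ω → E} (hX_meas : ∀ i, Measurable (X i))
    (hX_indep : iIndepFun X P) (hX_law : ∀ i, P.map (X i) = μ) {k : ℕ} {s t : Finset ι}
    (hs : #s = k + 1) (ht : #t = k + 1) {ρ : ℝ} {c : ℝ≥0∞}
    (hc : ∀ x, μ (closedBall x ρ) ≤ c) :
    P ({ω | IsCluster ρ (X · ω) s} ∩ {ω | IsCluster ρ (X · ω) t}) ≤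
      c ^ pairExponent k #(s ∩ t) := by
  obtain ⟨C, a, hC, ha, hanchor⟩ := exists_anchor_of_card_eq (E := E) hs ht
  rw [← hC]
  exact (measure_mono fun ω hω => hanchor ρ _ hω.1 hω.2).trans
    (hX_indep.measure_setOf_dist_anchor_le hX_meas hX_law C ha hc)

theorem measurableSet_setOf_isCluster {ι Ω E : Type*} [MeasurableSpace Ω] [MeasurableSpace E]
    [PseudoMetricSpace E] [OpensMeasurableSpace E] [SecondCountableTopology E]
    {X : ι → Ω → E} (hX_meas : ∀ i, Measurable (X i)) (ρ : ℝ) (s : Finset ι) :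
    MeasurableSet {ω | IsCluster ρ (X · ω) s} := by
  simp only [IsCluster, Set.ofPred_forall]
  exact s.measurableSet_biInter fun i _ => s.measurableSet_biInter fun j _ =>
    measurableSet_le ((hX_meas i).dist (hX_meas j)) measurable_const

theorem integral_sq_le_sum_measureReal_inter {α Ω : Type*} [MeasurableSpace Ω] {P : Measure Ω}
    [IsFiniteMeasure P] {N : Ω → ℝ} (S : Finset α) {A : α → Set Ω}
    (hA : ∀ s, MeasurableSet (A s)) (hN₀ : ∀ ω, 0 ≤ N ω) (hN : ∀ ω, N ω ≤ #{s ∈ S | ω ∈ A s}) :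
    ∫ ω, N ω ^ 2 ∂P ≤ ∑ q ∈ S ×ˢ S, P.real (A q.1 ∩ A q.2) := by
  have hsq : ∀ ω, ((#{s ∈ S | ω ∈ A s} : ℕ) : ℝ) ^ 2 =
      ∑ q ∈ S ×ˢ S, (A q.1 ∩ A q.2).indicator 1 ω := by
    intro ω
    simp only [Set.inter_indicator_one, Pi.mul_apply, sum_product, ← sum_mul_sum, sq,
      card_filter]
    push_cast
    simp [Set.indicator_apply]
  have hint : ∀ q ∈ S ×ˢ S, Integrable ((A q.1 ∩ A q.2).indicator (1 : Ω → ℝ)) P :=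
    fun q _ => (integrable_const 1).indicator ((hA q.1).inter (hA q.2))
  calc ∫ ω, N ω ^ 2 ∂P ≤ ∫ ω, ∑ q ∈ S ×ˢ S, (A q.1 ∩ A q.2).indicator 1 ω ∂P :=
        integral_mono_of_nonneg (.of_forall fun ω => sq_nonneg _) (integrable_finsetSum _ hint)
          (.of_forall fun ω => (pow_le_pow_left₀ (hN₀ ω) (hN ω) 2).trans_eq (hsq ω))
    _ = ∑ q ∈ S ×ˢ S, P.real (A q.1 ∩ A q.2) := by
        rw [integral_finsetSum _ hint]
        exact sum_congr rfl fun q _ => integral_indicator_one ((hA q.1).inter (hA q.2))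

section Circumsphere

variable {d k : ℕ}

theorem dist_circC_le_of_hEpsCond {ε : ℝ} {y : Fin (k + 1) → EuclideanSpace ℝ (Fin d)}
    (h : hEpsCond ε y) (m : Fin (k + 1)) : dist (y m) (circC y) ≤ ε := by
  obtain ⟨⟨hy, -⟩, hR⟩ := h
  have hdist : dist (y m) (circC y) = circR y := by
    simpa only [circC, circR, dif_pos hy] using
      (⟨y, hy⟩ : Affine.Simplex ℝ (EuclideanSpace ℝ (Fin d)) k).dist_circumcenter_eq_circumradius m
  exact hdist.trans_le hR

theorem exists_tupleOf_eq {n : ℕ} (Y : Fin n → EuclideanSpace ℝ (Fin d)) {s : Finset (Fin n)}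
    (hs : #s = k + 1) {i : Fin n} (hi : i ∈ s) : ∃ m, tupleOf Y k s m = Y i :=
  ⟨(s.orderIsoOfFin hs).symm ⟨i, hi⟩, by simp [tupleOf, hs]⟩

/-- The points lie on the circumsphere, whose radius is at most `r`. -/
theorem isCluster_of_gEpsCond {n : ℕ} {r : ℝ} {Y : Fin n → EuclideanSpace ℝ (Fin d)}
    {s : Finset (Fin n)} {P : Set (EuclideanSpace ℝ (Fin d))} (hs : #s = k + 1)
    (hg : gEpsCond r (tupleOf Y k s) P) : IsCluster (2 * r) Y s := by
  intro i hi j hj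
  obtain ⟨mi, hmi⟩ := exists_tupleOf_eq Y hs hi
  obtain ⟨mj, hmj⟩ := exists_tupleOf_eq Y hs hj
  rw [← hmi, ← hmj, two_mul]
  exact dist_triangle_right _ _ (circC (tupleOf Y k s)) |>.trans
    (add_le_add (dist_circC_le_of_hEpsCond hg.1 mi) (dist_circC_le_of_hEpsCond hg.1 mj))

theorem critCount_le_card_isCluster (n : ℕ) (r : ℝ) (Y : Fin n → EuclideanSpace ℝ (Fin d)) :
    critCount d k n r Y ≤ #{s ∈ powersetCard (k + 1) univ | IsCluster (2 * r) Y s} := by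
  refine card_le_card fun s hs => ?_
  rw [mem_filter, mem_powersetCard] at hs ⊢
  exact ⟨hs.1, isCluster_of_gEpsCond hs.1.2 hs.2⟩

end Circumsphere

/-- A partner `t` of `s` with `#(s ∩ t) = j` is determined by `t ∩ s ⊆ s` and `t \ s`. -/
theorem card_filter_card_inter_eq_le {α : Type*} [Fintype α] [DecidableEq α] {k : ℕ}
    {S : Finset (Finset α)} (hS : ∀ s ∈ S, #s = k + 1) (j : ℕ) :
    #{q ∈ S ×ˢ S | #(q.1 ∩ q.2) = j} ≤
      2 ^ (k + 1) * (Fintype.card α).choose (k + 1 - j) * #S := by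
  refine card_le_mul_card_image_of_maps_to (f := Prod.fst)
    (fun q hq => (mem_product.1 (mem_filter.1 hq).1).1) _ fun s hs => ?_
  calc #{q ∈ {q ∈ S ×ˢ S | #(q.1 ∩ q.2) = j} | q.1 = s}
      ≤ #(s.powersetCard j ×ˢ (univ : Finset α).powersetCard (k + 1 - j)) := by
        refine card_le_card_of_injOn (fun q => (q.2 ∩ s, q.2 \ s)) (fun q hq => ?_) ?_
        · simp only [coe_filter, mem_filter, mem_product, Set.mem_ofPred_eq] at hq
          obtain ⟨⟨⟨-, ht⟩, hj⟩, rfl⟩ := hq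
          have := card_sdiff_add_card_inter q.2 q.1
          rw [inter_comm] at hj
          rw [mem_coe, mem_product, mem_powersetCard, mem_powersetCard]
          dsimp only
          exact ⟨⟨inter_subset_right, hj⟩, subset_univ _, by rw [hS _ ht, hj] at this; omega⟩
        · intro q hq q' hq' h
          simp only [coe_filter, Set.mem_ofPred_eq] at hq hq'
          simp only [Prod.mk.injEq] at h
          refine Prod.ext (hq.2.trans hq'.2.symm) ?_
          rw [← sdiff_union_inter q.2 s, ← sdiff_union_inter q'.2 s, h.1, h.2]
    _ ≤ 2 ^ (k + 1) * (Fintype.card α).choose (k + 1 - j) := by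
        rw [card_product, card_powersetCard, card_powersetCard, hS s hs, card_univ]
        exact Nat.mul_le_mul_right _ (Nat.choose_le_two_pow _ _)

theorem withDensity_ofReal_closedBall_le {E : Type*} [NormedAddCommGroup E] [NormedSpace ℝ E]
    [MeasurableSpace E] [BorelSpace E] [FiniteDimensional ℝ E] (μ : Measure E)
    [μ.IsAddHaarMeasure] {f : E → ℝ} {M : ℝ} (hf : ∀ x, f x ≤ M) (x : E) {ρ : ℝ} (hρ : 0 ≤ ρ) :
    μ.withDensity (fun y => ENNReal.ofReal (f y)) (closedBall x ρ) ≤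
      ENNReal.ofReal (M * μ.real (closedBall 0 1) * ρ ^ Module.finrank ℝ E) := by
  rw [withDensity_apply _ measurableSet_closedBall]
  calc ∫⁻ y in closedBall x ρ, ENNReal.ofReal (f y) ∂μ
      ≤ ∫⁻ _ in closedBall x ρ, ENNReal.ofReal M ∂μ :=
        lintegral_mono fun y => ENNReal.ofReal_le_ofReal (hf y)
    _ = ENNReal.ofReal M * (ENNReal.ofReal (ρ ^ Module.finrank ℝ E) * μ (closedBall 0 1)) := by
        rw [setLIntegral_const, Measure.addHaar_closedBall' μ x hρ]
    _ = ENNReal.ofReal (M * μ.real (closedBall 0 1) * ρ ^ Module.finrank ℝ E) := by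
        rw [mul_assoc, ENNReal.ofReal_mul' (by positivity), ENNReal.ofReal_mul' (by positivity),
          ofReal_measureReal measure_closedBall_lt_top.ne, mul_comm (μ _)]

theorem tendsto_pow_mul_pow_pairExponent {k j : ℕ} (hj : j ≤ k + 1) {N c : ℕ → ℝ}
    (h₁ : Tendsto (fun n => N n ^ (k + 1) * c n ^ k) atTop (𝓝 0))
    (h₂ : Tendsto (fun n => N n * c n) atTop (𝓝 0)) :
    Tendsto (fun n => N n ^ (k + 1 - j) * N n ^ (k + 1) * c n ^ pairExponent k j)
      atTop (𝓝 0) := by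
  rcases eq_or_ne j 0 with rfl | hj₀
  · convert h₁.pow 2 using 2 with n
    · rw [pairExponent, if_pos rfl, Nat.sub_zero]
      ring
    · simp
  · convert h₁.mul (h₂.pow (k + 1 - j)) using 2 with n
    · rw [pairExponent, if_neg hj₀, show 2 * k + 1 - j = k + (k + 1 - j) by omega]
      ring
    · simp

theorem integral_critCount_sq_le {d k n : ℕ} {Ω : Type*} [MeasurableSpace Ω] {P : Measure Ω}
    [IsProbabilityMeasure P] {μ : Measure (EuclideanSpace ℝ (Fin d))} [IsProbabilityMeasure μ]
    {X : Fin n → Ω → EuclideanSpace ℝ (Fin d)} (hX_meas : ∀ i, Measurable (X i))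
    (hX_indep : iIndepFun X P) (hX_law : ∀ i, P.map (X i) = μ) {r c : ℝ} (hc₀ : 0 ≤ c)
    (hc : ∀ x, μ (closedBall x (2 * r)) ≤ ENNReal.ofReal c) :
    ∫ ω, (critCount d k n r (X · ω) : ℝ) ^ 2 ∂P ≤
      ∑ j ∈ range (k + 2), 2 ^ (k + 1) * ((n : ℝ) ^ (k + 1 - j) * n ^ (k + 1) *
        c ^ pairExponent k j) := by
  set S := powersetCard (k + 1) (univ : Finset (Fin n))
  have hS : ∀ s ∈ S, #s = k + 1 := fun s hs => (mem_powersetCard.1 hs).2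
  have hmaps : ∀ q ∈ S ×ˢ S, #(q.1 ∩ q.2) ∈ range (k + 2) := fun q hq => by
    have := card_le_card (inter_subset_left (s₁ := q.1) (s₂ := q.2))
    rw [hS _ (mem_product.1 hq).1] at this
    exact mem_range.2 (by omega)
  calc ∫ ω, (critCount d k n r (X · ω) : ℝ) ^ 2 ∂P
      ≤ ∑ q ∈ S ×ˢ S, P.real ({ω | IsCluster (2 * r) (X · ω) q.1} ∩
          {ω | IsCluster (2 * r) (X · ω) q.2}) :=
        integral_sq_le_sum_measureReal_inter S (measurableSet_setOf_isCluster hX_meas _)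
          (fun ω => Nat.cast_nonneg _)
          (fun ω => Nat.cast_le.2 (critCount_le_card_isCluster n r (X · ω)))
    _ ≤ ∑ q ∈ S ×ˢ S, c ^ pairExponent k #(q.1 ∩ q.2) := by
        refine sum_le_sum fun q hq => ?_
        obtain ⟨hq₁, hq₂⟩ := mem_product.1 hq
        refine ENNReal.toReal_le_of_le_ofReal (by positivity) ?_
        rw [ENNReal.ofReal_pow hc₀]
        exact hX_indep.measure_isCluster_inter_le hX_meas hX_law (hS _ hq₁) (hS _ hq₂) hc
    _ = ∑ j ∈ range (k + 2), #{q ∈ S ×ˢ S | #(q.1 ∩ q.2) = j} * c ^ pairExponent k j := by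
        rw [← sum_fiberwise_of_maps_to hmaps]
        refine sum_congr rfl fun j _ => ?_
        rw [sum_congr rfl fun q hq => by rw [(mem_filter.1 hq).2], sum_const, nsmul_eq_mul]
    _ ≤ _ := by
        refine sum_le_sum fun j _ => ?_
        rw [← mul_assoc]
        refine mul_le_mul_of_nonneg_right ?_ (by positivity)
        have hcount := card_filter_card_inter_eq_le hS j
        rw [card_powersetCard, card_univ, Fintype.card_fin] at hcount
        calc (#{q ∈ S ×ˢ S | #(q.1 ∩ q.2) = j} : ℝ)
            ≤ (2 ^ (k + 1) * n.choose (k + 1 - j) * n.choose (k + 1) : ℕ) := by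
              exact_mod_cast hcount
          _ ≤ 2 ^ (k + 1) * ((n : ℝ) ^ (k + 1 - j) * n ^ (k + 1)) := by
              push_cast
              rw [mul_assoc]
              gcongr <;> exact_mod_cast Nat.choose_le_pow _ _

theorem dist_subcritical_zero_general
    (d k : ℕ)
    (Ω : Type*) [MeasureSpace Ω] [IsProbabilityMeasure (ℙ : Measure Ω)]
    (f : EuclideanSpace ℝ (Fin d) → ℝ)
    (hf_nonneg : ∀ x, 0 ≤ f x)
    (hf_bdd : ∃ M, ∀ x, f x ≤ M)
    (X : ℕ → Ω → EuclideanSpace ℝ (Fin d))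
    (hX_meas : ∀ i, Measurable (X i))
    (hX_indep : iIndepFun X ℙ)
    (hX_law : ∀ i, Measure.map (X i) ℙ =
      volume.withDensity fun x => ENNReal.ofReal (f x))
    (r : ℕ → ℝ) (hr_pos : ∀ n, 0 < r n)
    (hsub : Tendsto (fun n : ℕ => (n : ℝ) * r n ^ d) atTop (𝓝 0))
    (hzero : Tendsto (fun n : ℕ => (n : ℝ) ^ (k + 1) * r n ^ (d * k)) atTop (𝓝 0)) :
    Tendsto (fun n : ℕ => ∫ ω, (critCount d k n (r n) (fun i : Fin n => X i.val ω) : ℝ) ^ 2) atTop (𝓝 0) := by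
  obtain ⟨M, hfM⟩ := hf_bdd
  set μ := volume.withDensity fun x => ENNReal.ofReal (f x)
  have : IsProbabilityMeasure μ :=
    hX_law 0 ▸ Measure.isProbabilityMeasure_map (hX_meas 0).aemeasurable
  set K := M * volume.real (closedBall (0 : EuclideanSpace ℝ (Fin d)) 1) * 2 ^ d
  have hK : 0 ≤ K := by have := (hf_nonneg 0).trans (hfM 0); positivity
  have hball : ∀ n x, μ (closedBall x (2 * r n)) ≤ ENNReal.ofReal (K * r n ^ d) := fun n x => by
    have hρ : 0 ≤ 2 * r n := by linarith [hr_pos n]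
    convert withDensity_ofReal_closedBall_le volume hfM x hρ using 2
    simp only [K, finrank_euclideanSpace_fin]
    ring
  have h₁ : Tendsto (fun n : ℕ => (n : ℝ) ^ (k + 1) * (K * r n ^ d) ^ k) atTop (𝓝 0) := by
    convert hzero.const_mul (K ^ k) using 2 with n
    · rw [mul_pow, ← pow_mul]
      ring
    · simp
  have h₂ : Tendsto (fun n : ℕ => (n : ℝ) * (K * r n ^ d)) atTop (𝓝 0) := by
    convert hsub.const_mul K using 2 with n
    · ring
    · simp
  refine squeeze_zero (fun n => integral_nonneg fun ω => sq_nonneg _) (fun n =>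
    integral_critCount_sq_le (fun i => hX_meas i) (hX_indep.precomp Fin.val_injective)
      (fun i => hX_law i) (by have := (hr_pos n).le; positivity) (hball n)) ?_
  simpa using tendsto_finsetSum (range (k + 2)) fun j hj =>
    (tendsto_pow_mul_pow_pairExponent (Nat.lt_succ_iff.1 (mem_range.1 hj)) h₁ h₂).const_mul
      (2 ^ (k + 1) : ℝ)

/-- Theorem 3.4, part 1: if `n r_n^d → 0` and `n^{k+1} r_n^{dk} → 0`, then `N_{k,n} → 0`
in `L²`, i.e. `E[N_{k,n}²] → 0`. -/
theorem dist_subcritical_zero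
    (d k : ℕ) (hd : 1 ≤ d) (hk1 : 1 ≤ k) (hkd : k ≤ d)
    (Ω : Type*) [MeasureSpace Ω] [IsProbabilityMeasure (ℙ : Measure Ω)]
    (f : EuclideanSpace ℝ (Fin d) → ℝ)
    (hf_meas : Measurable f) (hf_nonneg : ∀ x, 0 ≤ f x)
    (hf_bdd : ∃ M, ∀ x, f x ≤ M)
    (hf_prob : ∫ x, f x = 1)
    (X : ℕ → Ω → EuclideanSpace ℝ (Fin d))
    (hX_meas : ∀ i, Measurable (X i))
    (hX_indep : iIndepFun X ℙ)
    (hX_law : ∀ i, Measure.map (X i) ℙ =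
      volume.withDensity fun x => ENNReal.ofReal (f x))
    (r : ℕ → ℝ) (hr_pos : ∀ n, 0 < r n) (hr0 : Tendsto r atTop (𝓝 0))
    (hsub : Tendsto (fun n : ℕ => (n : ℝ) * r n ^ d) atTop (𝓝 0))
    (hzero : Tendsto (fun n : ℕ => (n : ℝ) ^ (k + 1) * r n ^ (d * k)) atTop (𝓝 0)) :
    Tendsto (fun n : ℕ => ∫ ω, (critCount d k n (r n) (fun i : Fin n => X i.val ω) : ℝ) ^ 2) atTop (𝓝 0) :=
  dist_subcritical_zero_general d k Ω f hf_nonneg hf_bdd X hX_meas hX_indep hX_law r hr_pos hsub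
    hzero
end
end

section
/- Let d ≥ 1 and 1 ≤ k ≤ d, and suppose f is lower bounded with convex support. There exists a constant D* ∈ (0,∞), depending only on f (and d, k), such that if n·r_n^d → ∞ and n·r_n^d ≥ D* log n for all large n, then lim_{n→∞} E[|N_{k,n}^{(g)} − N_{k,n}|] = 0, where N_{k,n}^{(g)} is the total number of index-k critical points of d_{X_n} in ℝ^d and N_{k,n} counts those within distance r_n of X_n. -/
open MeasureTheory ProbabilityTheory Filter Finset Metric
open scoped ENNReal NNReal Topology Classical

noncomputable section

/-- `N_{k,n}^{(g)}`: the total number of index-`k` critical points of the distance function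
of the point set `{X 0, …, X (n-1)}` in all of `ℝ^d` (no restriction on the critical value). -/
def globalCritCount (d k n : ℕ) (X : Fin n → EuclideanSpace ℝ (Fin d)) : ℕ :=
  ((Finset.powersetCard (k + 1) (Finset.univ : Finset (Fin n))).filter fun s =>
    hCond (tupleOf X k s) ∧
      Set.range X ∩ Metric.ball (circC (tupleOf X k s)) (circR (tupleOf X k s)) = ∅).card

/-!
If every `X_i` lies in the convex support `K` of `f`, the circumcenter of any critical simplex lies
in `K` as well. Because `f` is bounded below on `K` and `K` is convex, every ball of radius
`ρ ≤ 1` centred in `K` has mass at least `β ρ^d`. A maximal `r/2`-separated subset of `K` is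
therefore an `r/2`-net of at most `(β (r/4)^d)⁻¹` points, and the probability that some ball of
radius `r/4` around a net point misses all `n` sample points is at most
`(β (r/4)^d)⁻¹ exp(-n β (r/4)^d)`. Off this event every critical simplex with empty circumball
has circumradius `< r`, so `N^{(g)} = N`. On it, `|N^{(g)} - N| ≤ C(n, k+1) ≤ n^(k+1)`, which is
beaten by the factor `n^-(k+3)` that `n r^d ≥ D* log n` provides.
-/

section ConvexBody

variable {E : Type*} [NormedAddCommGroup E] [NormedSpace ℝ E] [MeasurableSpace E] [BorelSpace E]
  [FiniteDimensional ℝ E] (μ : Measure E) [μ.IsAddHaarMeasure]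

theorem Convex.ofReal_div_pow_mul_le_measure_ball_inter {K : Set E} (hK : Convex ℝ K) {c : E}
    (hc : c ∈ K) {R ρ : ℝ} (hKR : K ⊆ ball c R) (hρ : 0 < ρ) (hρR : ρ ≤ R) :
    ENNReal.ofReal ((ρ / R) ^ Module.finrank ℝ E) * μ K ≤ μ (ball c ρ ∩ K) := by
  have hR : 0 < R := hρ.trans_le hρR
  have ht : 0 < ρ / R := by positivity
  rw [← abs_of_nonneg (pow_nonneg ht.le _), ← Measure.addHaar_image_homothety]
  refine measure_mono ?_
  rintro _ ⟨y, hy, rfl⟩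
  refine ⟨?_, hK.lineMap_mem hc hy ⟨ht.le, div_le_one_of_le₀ hρR hR.le⟩⟩
  rw [mem_ball, AffineMap.homothety_apply, vsub_eq_sub, vadd_eq_add, dist_add_self_left, norm_smul,
    Real.norm_of_nonneg ht.le, ← dist_eq_norm]
  calc ρ / R * dist y c < ρ / R * R := mul_lt_mul_of_pos_left (hKR hy) ht
    _ = ρ := div_mul_cancel₀ _ hR.ne'

theorem IsCompact.exists_pos_mul_pow_le_withDensity_ball {K : Set E} (hKc : IsCompact K)
    (hK : Convex ℝ K) (hK0 : μ K ≠ 0) {f : E → ℝ} {c₀ : ℝ} (hc₀ : 0 < c₀)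
    (hf : ∀ x ∈ K, c₀ ≤ f x) :
    ∃ β > 0, ∀ x ∈ K, ∀ ρ, 0 < ρ → ρ ≤ 1 → ENNReal.ofReal (β * ρ ^ Module.finrank ℝ E) ≤
      μ.withDensity (fun x ↦ ENNReal.ofReal (f x)) (ball x ρ) := by
  set R := diam K + 1
  have hR : 1 ≤ R := by linarith [diam_nonneg (s := K)]
  have hKR : ∀ x ∈ K, K ⊆ ball x R := fun x hx y hy ↦
    mem_ball.2 ((dist_le_diam_of_mem hKc.isBounded hy hx).trans_lt (lt_add_one _))
  have hKfin : μ K ≠ ⊤ := hKc.measure_lt_top.ne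
  refine ⟨c₀ * (μ K).toReal / R ^ Module.finrank ℝ E, ?_, fun x hx ρ hρ hρ1 ↦ ?_⟩
  · have := ENNReal.toReal_pos hK0 hKfin
    positivity
  have hmass := hK.ofReal_div_pow_mul_le_measure_ball_inter μ hx (hKR x hx) hρ (hρ1.trans hR)
  calc ENNReal.ofReal (c₀ * (μ K).toReal / R ^ Module.finrank ℝ E * ρ ^ Module.finrank ℝ E)
      = ENNReal.ofReal c₀ * (ENNReal.ofReal ((ρ / R) ^ Module.finrank ℝ E) * μ K) := by
        conv_rhs => rw [← ENNReal.ofReal_toReal hKfin]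
        rw [← ENNReal.ofReal_mul (by positivity), ← ENNReal.ofReal_mul hc₀.le, div_pow]
        congr 1
        ring
    _ ≤ ENNReal.ofReal c₀ * μ (ball x ρ ∩ K) := by gcongr
    _ = ∫⁻ _ in ball x ρ ∩ K, ENNReal.ofReal c₀ ∂μ := (setLIntegral_const _ _).symm
    _ ≤ ∫⁻ y in ball x ρ ∩ K, ENNReal.ofReal (f y) ∂μ :=
        setLIntegral_mono' (measurableSet_ball.inter hKc.isClosed.measurableSet)
          fun y hy ↦ ENNReal.ofReal_le_ofReal (hf y hy.2)
    _ ≤ ∫⁻ y in ball x ρ, ENNReal.ofReal (f y) ∂μ := lintegral_mono_set Set.inter_subset_left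
    _ = μ.withDensity (fun x ↦ ENNReal.ofReal (f x)) (ball x ρ) :=
        (withDensity_apply _ measurableSet_ball).symm

end ConvexBody

section Packing

variable {X : Type*} [PseudoMetricSpace X] [MeasurableSpace X] [OpensMeasurableSpace X]
  {ν : Measure X} {ε : ℝ≥0} {m : ℝ≥0∞}

theorem Finset.card_mul_le_measure_univ_of_isSeparated {s : Finset X}
    (hs : IsSeparated (2 * ε : ℝ≥0) (s : Set X)) (hm : ∀ x ∈ s, m ≤ ν (ball x ε)) :
    s.card * m ≤ ν Set.univ := by
  have hdisj : (s : Set X).PairwiseDisjoint fun x ↦ ball x ε := by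
    intro x hx y hy hxy
    refine ball_disjoint_ball ?_
    have h : 2 * ε < nndist x y := by
      simpa only [edist_nndist, ENNReal.coe_lt_coe] using hs hx hy hxy
    have := NNReal.coe_lt_coe.2 h
    push_cast at this
    linarith
  calc s.card * m = ∑ _x ∈ s, m := by rw [Finset.sum_const, nsmul_eq_mul]
    _ ≤ ∑ x ∈ s, ν (ball x ε) := Finset.sum_le_sum hm
    _ = ν (⋃ x ∈ s, ball x ε) := (measure_biUnion_finset hdisj fun _ _ ↦ measurableSet_ball).symm
    _ ≤ ν Set.univ := measure_mono (Set.subset_univ _)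

theorem packingNumber_ne_top_of_le_measure_ball [IsFiniteMeasure ν] {A : Set X} (hm0 : m ≠ 0)
    (hm : ∀ x ∈ A, m ≤ ν (ball x ε)) : packingNumber (2 * ε) A ≠ ⊤ := by
  obtain ⟨N, hN⟩ := ENNReal.exists_nat_mul_gt hm0 (measure_ne_top ν Set.univ)
  intro htop
  obtain ⟨C, hCA, hC, hNC⟩ : ∃ C ⊆ A, IsSeparated (2 * ε : ℝ≥0) C ∧ (N : ℕ∞) < C.encard := by
    have : (N : ℕ∞) < packingNumber (2 * ε) A := htop ▸ ENat.natCast_lt_top N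
    simpa only [packingNumber, lt_iSup_iff, exists_prop] using this
  obtain ⟨t, htC, htN⟩ := Set.exists_subset_encard_eq hNC.le
  have ht : t.Finite := Set.finite_of_encard_eq_coe htN
  have hmass := ht.toFinset.card_mul_le_measure_univ_of_isSeparated (ν := ν)
    (by simpa using hC.subset htC) fun x hx ↦ hm x (hCA (htC (by simpa using hx)))
  rw [← Set.ncard_eq_toFinset_card t ht, Set.ncard_def, htN] at hmass
  exact lt_irrefl _ (hN.trans_le (by simpa using hmass))

theorem exists_finset_isCover_card_mul_le [IsFiniteMeasure ν] {A : Set X} (hm0 : m ≠ 0)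
    (hm : ∀ x ∈ A, m ≤ ν (ball x ε)) :
    ∃ C : Finset X, ↑C ⊆ A ∧ IsCover (2 * ε) A C ∧ C.card * m ≤ ν Set.univ := by
  have hpack := packingNumber_ne_top_of_le_measure_ball hm0 hm
  have hfin := Set.encard_ne_top_iff.1 (encard_maximalSeparatedSet hpack ▸ hpack)
  have hsub : ↑hfin.toFinset ⊆ A := by rw [hfin.coe_toFinset]; exact maximalSeparatedSet_subset
  refine ⟨hfin.toFinset, hsub, ?_, ?_⟩
  · rw [hfin.coe_toFinset]
    exact isCover_maximalSeparatedSet hpack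
  · refine hfin.toFinset.card_mul_le_measure_univ_of_isSeparated ?_ fun x hx ↦ hm x (hsub hx)
    rw [hfin.coe_toFinset]
    exact isSeparated_maximalSeparatedSet

end Packing

section Sampling

variable {Ω E : Type*} [MeasurableSpace Ω] {P : Measure Ω} [IsProbabilityMeasure P]
  [MeasurableSpace E] {ν : Measure E} {X : ℕ → Ω → E}

theorem ProbabilityTheory.iIndepFun.measureReal_iInter_preimage_compl_le_exp
    (hX_meas : ∀ i, Measurable (X i)) (hX_indep : iIndepFun X P) (hX_law : ∀ i, P.map (X i) = ν)
    {B : Set E} (hB : MeasurableSet B) {p : ℝ} (hp0 : 0 ≤ p) (hp : ENNReal.ofReal p ≤ ν B)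
    (n : ℕ) :
    P.real (⋂ i ∈ range n, X i ⁻¹' Bᶜ) ≤ Real.exp (-(n * p)) := by
  have hmiss : ∀ i, P (X i ⁻¹' Bᶜ) ≤ ENNReal.ofReal (Real.exp (-p)) := fun i ↦ by
    rw [Set.preimage_compl, prob_compl_eq_one_sub (hX_meas i hB),
      ← Measure.map_apply (hX_meas i) hB, hX_law]
    calc 1 - ν B ≤ 1 - ENNReal.ofReal p := tsub_le_tsub_left hp 1
      _ = ENNReal.ofReal (1 - p) := by rw [ENNReal.ofReal_sub _ hp0, ENNReal.ofReal_one]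
      _ ≤ ENNReal.ofReal (Real.exp (-p)) := by
        gcongr
        linarith [Real.add_one_le_exp (-p)]
  refine ENNReal.toReal_le_of_le_ofReal (Real.exp_pos _).le ?_
  calc P (⋂ i ∈ range n, X i ⁻¹' Bᶜ) = ∏ i ∈ range n, P (X i ⁻¹' Bᶜ) :=
        hX_indep.measure_inter_preimage_eq_mul _ fun _ _ ↦ hB.compl
    _ ≤ ∏ _i ∈ range n, ENNReal.ofReal (Real.exp (-p)) := Finset.prod_le_prod' fun i _ ↦ hmiss i
    _ = ENNReal.ofReal (Real.exp (-(n * p))) := by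
        rw [Finset.prod_const, card_range, ← ENNReal.ofReal_pow (Real.exp_pos _).le,
          ← Real.exp_nat_mul, mul_neg]

theorem ProbabilityTheory.iIndepFun.measureReal_biUnion_iInter_preimage_compl_le
    (hX_meas : ∀ i, Measurable (X i)) (hX_indep : iIndepFun X P) (hX_law : ∀ i, P.map (X i) = ν)
    {ι : Type*} (C : Finset ι) {B : ι → Set E} (hB : ∀ c ∈ C, MeasurableSet (B c)) {p : ℝ}
    (hp0 : 0 ≤ p) (hp : ∀ c ∈ C, ENNReal.ofReal p ≤ ν (B c)) (n : ℕ) :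
    P.real (⋃ c ∈ C, ⋂ i ∈ range n, X i ⁻¹' (B c)ᶜ) ≤ C.card * Real.exp (-(n * p)) := by
  refine (measureReal_biUnion_finset_le _ _).trans ?_
  rw [← nsmul_eq_mul, ← Finset.sum_const]
  exact Finset.sum_le_sum fun c hc ↦ hX_indep.measureReal_iInter_preimage_compl_le_exp hX_meas
    hX_law (hB c hc) hp0 (hp c hc) n

end Sampling

section Critical

variable {d k n : ℕ}

theorem range_tupleOf_subset (X : Fin n → EuclideanSpace ℝ (Fin d)) {s : Finset (Fin n)}
    (hs : s.card = k + 1) : Set.range (tupleOf X k s) ⊆ Set.range X := by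
  rintro _ ⟨i, rfl⟩
  simp only [tupleOf, dif_pos hs, Set.mem_range_self]

theorem hCond.circR_lt_of_isCover {y : Fin (k + 1) → EuclideanSpace ℝ (Fin d)} (hy : hCond y)
    {K : Set (EuclideanSpace ℝ (Fin d))} (hK : Convex ℝ K) (hyK : Set.range y ⊆ K)
    {P C : Set (EuclideanSpace ℝ (Fin d))} (hPy : P ∩ ball (circC y) (circR y) = ∅) {t : ℝ≥0}
    (hC : IsCover t K C) {s : ℝ} (hhit : ∀ c ∈ C, (P ∩ ball c s).Nonempty) :
    circR y < s + t := by
  have hzK : circC y ∈ K := convexHull_min hyK hK (intrinsicInterior_subset hy.2)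
  obtain ⟨c, hcC, hzc⟩ := hC hzK
  obtain ⟨x, hxP, hxc⟩ := hhit c hcC
  have hzc : dist (circC y) c ≤ t := by
    simpa only [Set.mem_ofPred_eq, edist_le_coe, ← NNReal.coe_le_coe, coe_nndist] using hzc
  have hxz : x ∉ ball (circC y) (circR y) := fun hx ↦ hPy.subset ⟨hxP, hx⟩
  calc circR y ≤ dist x (circC y) := not_lt.1 hxz
    _ ≤ dist x c + dist c (circC y) := dist_triangle _ _ _
    _ < s + t := add_lt_add_of_lt_of_le (mem_ball.1 hxc) (dist_comm c (circC y) ▸ hzc)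

theorem critCount_le_globalCritCount (r : ℝ) (X : Fin n → EuclideanSpace ℝ (Fin d)) :
    critCount d k n r X ≤ globalCritCount d k n X :=
  Finset.card_le_card <| Finset.monotone_filter_right _ fun _ _ hg ↦ ⟨hg.1.1, hg.2⟩

theorem globalCritCount_le_choose (X : Fin n → EuclideanSpace ℝ (Fin d)) :
    globalCritCount d k n X ≤ n.choose (k + 1) :=
  (Finset.card_filter_le _ _).trans_eq (by simp)

theorem abs_globalCritCount_sub_critCount_le_choose (r : ℝ)
    (X : Fin n → EuclideanSpace ℝ (Fin d)) :
    |(globalCritCount d k n X : ℝ) - critCount d k n r X| ≤ n.choose (k + 1) := by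
  have hglob := globalCritCount_le_choose (k := k) X
  exact abs_sub_le_of_nonneg_of_le (by positivity) (by exact_mod_cast hglob) (by positivity)
    (by exact_mod_cast (critCount_le_globalCritCount r X).trans hglob)

theorem globalCritCount_eq_critCount_of_isCover {K C : Set (EuclideanSpace ℝ (Fin d))}
    (hK : Convex ℝ K) {X : Fin n → EuclideanSpace ℝ (Fin d)} (hXK : ∀ i, X i ∈ K) {t : ℝ≥0}
    (hC : IsCover t K C) {s r : ℝ} (hhit : ∀ c ∈ C, ∃ i, X i ∈ ball c s) (hsr : s + t ≤ r) :
    globalCritCount d k n X = critCount d k n r X := by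
  refine le_antisymm (Finset.card_le_card fun u hu ↦ ?_) (critCount_le_globalCritCount r X)
  obtain ⟨hu, hcrit, hempty⟩ := Finset.mem_filter.1 hu
  have hyK := (range_tupleOf_subset X (Finset.mem_powersetCard.1 hu).2).trans
    (Set.range_subset_iff.2 hXK)
  have hR := hcrit.circR_lt_of_isCover hK hyK hempty hC fun c hc ↦ by
    obtain ⟨i, hi⟩ := hhit c hc
    exact ⟨X i, Set.mem_range_self i, hi⟩
  exact Finset.mem_filter.2 ⟨hu, ⟨hcrit, hR.le.trans hsr⟩, hempty⟩

end Critical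

theorem integral_abs_globalCritCount_sub_critCount_le {d k : ℕ} {Ω : Type*} [MeasurableSpace Ω]
    {P : Measure Ω} [IsProbabilityMeasure P] {ν : Measure (EuclideanSpace ℝ (Fin d))}
    [IsProbabilityMeasure ν] {X : ℕ → Ω → EuclideanSpace ℝ (Fin d)}
    (hX_meas : ∀ i, Measurable (X i)) (hX_indep : iIndepFun X P) (hX_law : ∀ i, P.map (X i) = ν)
    {K : Set (EuclideanSpace ℝ (Fin d))} (hK : Convex ℝ K) (hKm : MeasurableSet K)
    (hνK : ν Kᶜ = 0) {m r : ℝ} (hm : 0 < m) (hr : 0 ≤ r)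
    (hball : ∀ x ∈ K, ENNReal.ofReal m ≤ ν (ball x (r / 4))) (n : ℕ) :
    ∫ ω, |(globalCritCount d k n (fun i : Fin n ↦ X i ω) : ℝ) -
        critCount d k n r (fun i : Fin n ↦ X i ω)| ∂P ≤
      n.choose (k + 1) * (Real.exp (-(n * m)) / m) := by
  set ε : ℝ≥0 := ⟨r / 4, by positivity⟩
  obtain ⟨C, hCK, hC, hCcard⟩ :=
    exists_finset_isCover_card_mul_le (A := K) (ε := ε) (ENNReal.ofReal_pos.2 hm).ne' hball
  have hcard : (C.card : ℝ) ≤ 1 / m := by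
    rw [le_div_iff₀ hm, ← ENNReal.ofReal_le_one, ENNReal.ofReal_mul (by positivity),
      ENNReal.ofReal_natCast, ← measure_univ (μ := ν)]
    exact hCcard
  set Sout := ⋃ i ∈ range n, X i ⁻¹' Kᶜ
  set Smiss := ⋃ c ∈ C, ⋂ i ∈ range n, X i ⁻¹' (ball c (r / 4))ᶜ
  have hpoint : ∀ ω, |(globalCritCount d k n (fun i : Fin n ↦ X i ω) : ℝ) -
      critCount d k n r (fun i : Fin n ↦ X i ω)| ≤
      (Sout ∪ Smiss).indicator (fun _ ↦ (n.choose (k + 1) : ℝ)) ω := by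
    intro ω
    by_cases hω : ω ∈ Sout ∪ Smiss
    · simpa only [Set.indicator_of_mem hω] using abs_globalCritCount_sub_critCount_le_choose r _
    simp only [Sout, Smiss, Set.mem_union, Set.mem_iUnion, Set.mem_iInter, Set.mem_preimage,
      Set.mem_compl_iff, mem_range, not_or, not_exists, not_forall, not_not] at hω
    have hsr : r / 4 + ((2 * ε : ℝ≥0) : ℝ) ≤ r := by
      change r / 4 + 2 * (r / 4) ≤ r
      linarith
    have hhit : ∀ c ∈ (C : Set _), ∃ i : Fin n, X i ω ∈ ball c (r / 4) := fun c hc ↦ by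
      obtain ⟨i, hi, hXi⟩ := hω.2 c hc
      exact ⟨⟨i, hi⟩, hXi⟩
    rw [globalCritCount_eq_critCount_of_isCover hK (fun i ↦ hω.1 i i.2) hC hhit hsr, sub_self,
      abs_zero]
    exact Set.indicator_nonneg (fun _ _ ↦ Nat.cast_nonneg _) ω
  have hSm : MeasurableSet (Sout ∪ Smiss) :=
    .union (.biUnion (Set.to_countable _) fun i _ ↦ hX_meas i hKm.compl)
      (.biUnion (Set.to_countable _) fun c _ ↦ .biInter (Set.to_countable _)
        fun i _ ↦ hX_meas i measurableSet_ball.compl)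
  have hout : P.real Sout = 0 := by
    refine (measureReal_eq_zero_iff (measure_ne_top _ _)).2 <|
      (measure_biUnion_null_iff (Set.to_countable _)).2 fun i _ ↦ ?_
    rwa [← Measure.map_apply (hX_meas i) hKm.compl, hX_law]
  have hmiss : P.real Smiss ≤ C.card * Real.exp (-(n * m)) :=
    hX_indep.measureReal_biUnion_iInter_preimage_compl_le hX_meas hX_law C
      (fun _ _ ↦ measurableSet_ball) hm.le (fun c hc ↦ hball c (hCK hc)) n
  calc ∫ ω, |(globalCritCount d k n (fun i : Fin n ↦ X i ω) : ℝ) -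
        critCount d k n r (fun i : Fin n ↦ X i ω)| ∂P
      ≤ ∫ ω, (Sout ∪ Smiss).indicator (fun _ ↦ (n.choose (k + 1) : ℝ)) ω ∂P :=
        integral_mono_of_nonneg (.of_forall fun _ ↦ abs_nonneg _)
          ((integrable_const _).indicator hSm) (.of_forall hpoint)
    _ = P.real (Sout ∪ Smiss) * n.choose (k + 1) := by
        rw [integral_indicator_const _ hSm, smul_eq_mul]
    _ ≤ (C.card * Real.exp (-(n * m))) * n.choose (k + 1) := by
        gcongr
        exact ((measureReal_union_le _ _).trans_eq (by rw [hout, zero_add])).trans hmiss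
    _ ≤ (1 / m * Real.exp (-(n * m))) * n.choose (k + 1) := by gcongr
    _ = n.choose (k + 1) * (Real.exp (-(n * m)) / m) := by ring

theorem natCast_choose_mul_exp_neg_div_le {n k : ℕ} {m : ℝ} (hn : 0 < n) (hm : 0 < m)
    (hlog : (k + 3) * Real.log n ≤ n * m) :
    (n.choose (k + 1) : ℝ) * (Real.exp (-(n * m)) / m) ≤ ((n : ℝ) * (n * m))⁻¹ := by
  have hn' : (0 : ℝ) < n := Nat.cast_pos.2 hn
  have hexp : Real.exp (-(n * m)) ≤ ((n : ℝ) ^ (k + 3))⁻¹ := by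
    rw [Real.exp_neg]
    refine inv_anti₀ (by positivity) ?_
    calc (n : ℝ) ^ (k + 3) = Real.exp ((k + 3 : ℕ) * Real.log n) := by
          rw [Real.exp_nat_mul, Real.exp_log hn']
      _ ≤ Real.exp (n * m) := Real.exp_le_exp.2 (by exact_mod_cast hlog)
  calc (n.choose (k + 1) : ℝ) * (Real.exp (-(n * m)) / m)
      ≤ (n : ℝ) ^ (k + 1) * (((n : ℝ) ^ (k + 3))⁻¹ / m) := by
        gcongr
        exact_mod_cast Nat.choose_le_pow n (k + 1)
    _ = ((n : ℝ) * (n * m))⁻¹ := by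
        field_simp
        ring

theorem tendsto_integral_abs_globalCritCount_sub_critCount {d k : ℕ} {Ω : Type*}
    [MeasurableSpace Ω] {P : Measure Ω} [IsProbabilityMeasure P]
    {ν : Measure (EuclideanSpace ℝ (Fin d))} [IsProbabilityMeasure ν]
    {X : ℕ → Ω → EuclideanSpace ℝ (Fin d)} (hX_meas : ∀ i, Measurable (X i))
    (hX_indep : iIndepFun X P) (hX_law : ∀ i, P.map (X i) = ν)
    {K : Set (EuclideanSpace ℝ (Fin d))} (hK : Convex ℝ K) (hKm : MeasurableSet K)
    (hνK : ν Kᶜ = 0) {β : ℝ} (hβ : 0 < β)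
    (hball : ∀ x ∈ K, ∀ ρ, 0 < ρ → ρ ≤ 1 → ENNReal.ofReal (β * ρ ^ d) ≤ ν (ball x ρ))
    {r : ℕ → ℝ} (hr : ∀ n, 0 < r n) (hr0 : Tendsto r atTop (𝓝 0))
    (hrd : Tendsto (fun n : ℕ ↦ (n : ℝ) * r n ^ d) atTop atTop)
    (hlog : ∀ᶠ n : ℕ in atTop, (k + 3) * 4 ^ d / β * Real.log n ≤ n * r n ^ d) :
    Tendsto (fun n : ℕ ↦ ∫ ω, |(globalCritCount d k n (fun i : Fin n ↦ X i ω) : ℝ) -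
        critCount d k n (r n) (fun i : Fin n ↦ X i ω)| ∂P) atTop (𝓝 0) := by
  set m : ℕ → ℝ := fun n ↦ β * (r n / 4) ^ d
  have hm : ∀ n, 0 < m n := fun n ↦ mul_pos hβ (pow_pos (div_pos (hr n) four_pos) d)
  have hnm : ∀ n : ℕ, (n : ℝ) * m n = β / 4 ^ d * (n * r n ^ d) := fun n ↦ by
    simp only [m, div_pow]
    ring
  have hgrow : Tendsto (fun n : ℕ ↦ (n : ℝ) * (n * m n)) atTop atTop :=
    tendsto_natCast_atTop_atTop.atTop_mul_atTop₀ <| by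
      simpa only [hnm] using hrd.const_mul_atTop (by positivity)
  refine squeeze_zero' (.of_forall fun n ↦ integral_nonneg fun ω ↦ abs_nonneg _) ?_
    hgrow.inv_tendsto_atTop
  filter_upwards [hr0.eventually (ge_mem_nhds four_pos), hlog, eventually_gt_atTop 0]
    with n hr4 hlogn hn
  have hlogm : (k + 3) * Real.log n ≤ n * m n := by
    rw [hnm]
    calc (k + 3) * Real.log n = β / 4 ^ d * ((k + 3) * 4 ^ d / β * Real.log n) := by
          field_simp
      _ ≤ β / 4 ^ d * (n * r n ^ d) := by gcongr
  refine (integral_abs_globalCritCount_sub_critCount_le hX_meas hX_indep hX_law hK hKm hνK (hm n)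
    (hr n).le (fun x hx ↦ hball x hx (r n / 4) (by linarith [hr n]) (by linarith)) n).trans ?_
  exact natCast_choose_mul_exp_neg_div_le hn (hm n) hlogm

theorem withDensity_ofReal_compl_tsupport {α : Type*} [TopologicalSpace α] [MeasurableSpace α]
    [OpensMeasurableSpace α] (μ : Measure α) (f : α → ℝ) :
    μ.withDensity (fun x ↦ ENNReal.ofReal (f x)) (tsupport f)ᶜ = 0 := by
  have hm := (isClosed_tsupport f).measurableSet.compl
  rw [withDensity_apply _ hm, setLIntegral_congr_fun hm (g := fun _ ↦ 0) fun x hx ↦ by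
    simp [image_eq_zero_of_notMem_tsupport hx], lintegral_zero]

theorem global_vs_local_general
    (d k : ℕ)
    (Ω : Type*) [MeasureSpace Ω] [IsProbabilityMeasure (ℙ : Measure Ω)]
    (f : EuclideanSpace ℝ (Fin d) → ℝ)
    (X : ℕ → Ω → EuclideanSpace ℝ (Fin d))
    (hX_meas : ∀ i, Measurable (X i))
    (hX_indep : iIndepFun X ℙ)
    (hX_law : ∀ i, Measure.map (X i) ℙ =
      volume.withDensity fun x => ENNReal.ofReal (f x))
    (hsupp_cpt : IsCompact (tsupport f))
    (hsupp_pos : ∃ c > 0, ∀ x ∈ tsupport f, c ≤ f x)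
    (hsupp_conv : Convex ℝ (tsupport f))
 :
    ∃ Dstar : ℝ, 0 < Dstar ∧
      ∀ r : ℕ → ℝ, (∀ n, 0 < r n) → Tendsto r atTop (𝓝 0) →
        Tendsto (fun n : ℕ => (n : ℝ) * r n ^ d) atTop atTop →
        (∀ᶠ n : ℕ in atTop, Dstar * Real.log n ≤ (n : ℝ) * r n ^ d) →
        Tendsto (fun n : ℕ => ∫ ω,
            |(globalCritCount d k n (fun i : Fin n => X i.val ω) : ℝ) -
              (critCount d k n (r n) (fun i : Fin n => X i.val ω) : ℝ)|)
          atTop (𝓝 0) := by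
  obtain ⟨c₀, hc₀, hf⟩ := hsupp_pos
  set K := tsupport f
  set ν := volume.withDensity fun x ↦ ENNReal.ofReal (f x)
  have hKm : MeasurableSet K := (isClosed_tsupport f).measurableSet
  have : IsProbabilityMeasure ν :=
    hX_law 0 ▸ Measure.isProbabilityMeasure_map (hX_meas 0).aemeasurable
  have hνK : ν Kᶜ = 0 := withDensity_ofReal_compl_tsupport volume f
  have hK0 : volume K ≠ 0 := fun h ↦ by
    have hνK' := (prob_compl_eq_zero_iff hKm).1 hνK
    rw [withDensity_absolutelyContinuous _ _ h] at hνK'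
    exact zero_ne_one hνK'
  obtain ⟨β, hβ, hball⟩ :=
    hsupp_cpt.exists_pos_mul_pow_le_withDensity_ball volume hsupp_conv hK0 hc₀ hf
  rw [finrank_euclideanSpace_fin] at hball
  exact ⟨(k + 3) * 4 ^ d / β, by positivity, fun r hr hr0 hrd hlog ↦
    tendsto_integral_abs_globalCritCount_sub_critCount hX_meas hX_indep hX_law hsupp_conv hKm hνK
      hβ hball hr hr0 hrd hlog⟩

/-- Proposition 3.10: if `f` is lower bounded with convex support, there is a constant
`D* > 0` (depending only on `f`, `d`, `k`) such that whenever `n r_n^d → ∞` and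
`n r_n^d ≥ D* log n` for all large `n`, one has `E[|N_{k,n}^{(g)} - N_{k,n}|] → 0`. -/
theorem global_vs_local
    (d k : ℕ) (hd : 1 ≤ d) (hk1 : 1 ≤ k) (hkd : k ≤ d)
    (Ω : Type*) [MeasureSpace Ω] [IsProbabilityMeasure (ℙ : Measure Ω)]
    (f : EuclideanSpace ℝ (Fin d) → ℝ)
    (hf_meas : Measurable f) (hf_nonneg : ∀ x, 0 ≤ f x)
    (hf_bdd : ∃ M, ∀ x, f x ≤ M)
    (hf_prob : ∫ x, f x = 1)
    (X : ℕ → Ω → EuclideanSpace ℝ (Fin d))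
    (hX_meas : ∀ i, Measurable (X i))
    (hX_indep : iIndepFun X ℙ)
    (hX_law : ∀ i, Measure.map (X i) ℙ =
      volume.withDensity fun x => ENNReal.ofReal (f x))
    (hsupp_cpt : IsCompact (tsupport f))
    (hsupp_pos : ∃ c > 0, ∀ x ∈ tsupport f, c ≤ f x)
    (hsupp_conv : Convex ℝ (tsupport f))
 :
    ∃ Dstar : ℝ, 0 < Dstar ∧
      ∀ r : ℕ → ℝ, (∀ n, 0 < r n) → Tendsto r atTop (𝓝 0) →
        Tendsto (fun n : ℕ => (n : ℝ) * r n ^ d) atTop atTop →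
        (∀ᶠ n : ℕ in atTop, Dstar * Real.log n ≤ (n : ℝ) * r n ^ d) →
        Tendsto (fun n : ℕ => ∫ ω,
            |(globalCritCount d k n (fun i : Fin n => X i.val ω) : ℝ) -
              (critCount d k n (r n) (fun i : Fin n => X i.val ω) : ℝ)|)
          atTop (𝓝 0) :=
  global_vs_local_general d k Ω f X hX_meas hX_indep hX_law hsupp_cpt hsupp_pos hsupp_conv
end
end

section
/- Let d ≥ 1 and k ≥ 1 be integers, let f : ℝ^d → [0,∞) be a measurable probability density with f ≤ f_max everywhere, and let X_1, …, X_k be i.i.d. random points in ℝ^d with density f. Then for every r > 0, the probability that there exists a Euclidean ball of radius r containing all of X_1, …, X_k is at most (f_max · ω_d · 2^d)^{k−1} · r^{d(k−1)}, where ω_d is the Lebesgue volume of the unit ball in ℝ^d. -/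
/-!
If `X_1, …, X_k` all lie in a ball of radius `r`, then every `X_i` lies in the ball of
radius `2r` around `X_1`. Conditioning on `X_1`, by independence each of the other `k - 1`
points falls into that ball with probability at most `f_max ω_d (2r)^d`.
-/

open MeasureTheory ProbabilityTheory Filter Finset Metric
open scoped ENNReal NNReal Topology Classical

noncomputable section

theorem measure_pi_forall_mem_closedBall_le {E : Type*} [PseudoMetricSpace E]
    [MeasurableSpace E] [OpensMeasurableSpace E] [SecondCountableTopology E] {m : ℕ}
    (μ : Measure E) [IsProbabilityMeasure μ] {ρ : ℝ} {c : ℝ≥0∞}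
    (hc : ∀ x, μ (closedBall x ρ) ≤ c) :
    Measure.pi (fun _ : Fin (m + 1) => μ) {y | ∀ i, y i ∈ closedBall (y 0) ρ} ≤ c ^ m := by
  set T : Set (E × (Fin m → E)) := {p | ∀ j, p.2 j ∈ closedBall p.1 ρ}
  have hT : MeasurableSet T := by
    simp only [T, Set.ofPred_forall, mem_closedBall]
    exact .iInter fun j => measurableSet_le
      ((measurable_pi_apply j).comp measurable_snd |>.dist measurable_fst) measurable_const
  have hslice (x : E) : Prod.mk x ⁻¹' T = Set.univ.pi fun _ => closedBall x ρ := by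
    ext; simp [T]
  -- Fubini over the first coordinate `y 0` and the product of the remaining `m` ones
  rw [← (measurePreserving_piFinSuccAbove (fun _ => μ) 0).symm.measure_preimage_equiv]
  calc (μ.prod (Measure.pi fun _ => μ)) _ ≤ (μ.prod (Measure.pi fun _ => μ)) T :=
        measure_mono fun p hp j => by
          simpa [MeasurableEquiv.piFinSuccAbove] using hp (Fin.succAbove 0 j)
    _ = ∫⁻ x, ∏ _j : Fin m, μ (closedBall x ρ) ∂μ := by
        simp only [Measure.prod_apply hT, hslice, Measure.pi_pi]
    _ ≤ ∫⁻ _, c ^ m ∂μ := lintegral_mono fun x => by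
        simpa only [Finset.prod_const, Finset.card_univ, Fintype.card_fin] using
          pow_le_pow_left' (hc x) m
    _ = c ^ m := by simp

theorem unitBallVol_nonneg (d : ℕ) : 0 ≤ unitBallVol d := ENNReal.toReal_nonneg

theorem withDensity_ofReal_le_smul {α : Type*} [MeasurableSpace α] (μ : Measure α)
    {f : α → ℝ} {C : ℝ} (hf : ∀ x, f x ≤ C) :
    μ.withDensity (fun x => ENNReal.ofReal (f x)) ≤ ENNReal.ofReal C • μ := by
  rw [← withDensity_const]
  exact withDensity_mono (.of_forall fun x => ENNReal.ofReal_le_ofReal (hf x))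

theorem volume_closedBall_eq_unitBallVol_mul {d : ℕ} (x : EuclideanSpace ℝ (Fin d)) {ρ : ℝ}
    (hρ : 0 ≤ ρ) : volume (closedBall x ρ) = ENNReal.ofReal (unitBallVol d * ρ ^ d) := by
  rw [Measure.addHaar_closedBall _ x hρ, finrank_euclideanSpace_fin,
    ENNReal.ofReal_mul (unitBallVol_nonneg d), unitBallVol,
    ENNReal.ofReal_toReal measure_ball_lt_top.ne, mul_comm]

theorem withDensity_closedBall_le {d : ℕ} {f : EuclideanSpace ℝ (Fin d) → ℝ} {C : ℝ}
    (hf : ∀ x, f x ≤ C) (x : EuclideanSpace ℝ (Fin d)) {ρ : ℝ} (hρ : 0 ≤ ρ) :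
    volume.withDensity (fun y => ENNReal.ofReal (f y)) (closedBall x ρ) ≤
      ENNReal.ofReal (C * unitBallVol d * ρ ^ d) := by
  calc _ ≤ (ENNReal.ofReal C • volume) (closedBall x ρ) := withDensity_ofReal_le_smul _ hf _
    _ = _ := by
      rw [Measure.smul_apply, volume_closedBall_eq_unitBallVol_mul x hρ, smul_eq_mul,
        ← ENNReal.ofReal_mul' (mul_nonneg (unitBallVol_nonneg d) (pow_nonneg hρ d)), mul_assoc]

theorem points_in_ball_general
    (d k : ℕ)
    (Ω : Type*) [MeasureSpace Ω] [IsProbabilityMeasure (ℙ : Measure Ω)]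
    (f : EuclideanSpace ℝ (Fin d) → ℝ)
    (hf_nonneg : ∀ x, 0 ≤ f x)
    (fmax : ℝ) (hfmax : ∀ x, f x ≤ fmax)
    (X : Fin k → Ω → EuclideanSpace ℝ (Fin d))
    (hX_meas : ∀ i, Measurable (X i))
    (hX_indep : iIndepFun X ℙ)
    (hX_law : ∀ i, Measure.map (X i) ℙ =
      volume.withDensity fun x => ENNReal.ofReal (f x))
    (r : ℝ) (hr : 0 < r) :
    ℙ {ω | ∃ c : EuclideanSpace ℝ (Fin d), ∀ i : Fin k, X i ω ∈ Metric.closedBall c r} ≤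
      ENNReal.ofReal ((fmax * unitBallVol d * 2 ^ d) ^ (k - 1) * r ^ (d * (k - 1))) := by
  cases k with
  | zero => simp
  | succ m =>
  set μ := volume.withDensity fun x => ENNReal.ofReal (f x)
  have : IsProbabilityMeasure μ :=
    hX_law 0 ▸ Measure.isProbabilityMeasure_map (hX_meas 0).aemeasurable
  have hX_joint : Measure.map (fun ω i => X i ω) ℙ = Measure.pi fun _ => μ := by
    rw [(iIndepFun_iff_map_fun_eq_pi_map fun i => (hX_meas i).aemeasurable).1 hX_indep]
    simp_rw [hX_law]
  have hevent : {ω | ∃ c, ∀ i, X i ω ∈ closedBall c r} ⊆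
      (fun ω i => X i ω) ⁻¹' {y | ∀ i, y i ∈ closedBall (y 0) (2 * r)} := by
    rintro ω ⟨c, hc⟩ i
    refine closedBall_subset_closedBall' ?_ (hc i)
    linarith [mem_closedBall'.1 (hc 0)]
  have hfmax0 : 0 ≤ fmax := (hf_nonneg 0).trans (hfmax 0)
  have hω := unitBallVol_nonneg d
  calc ℙ {ω | ∃ c, ∀ i, X i ω ∈ closedBall c r}
      ≤ Measure.map (fun ω i => X i ω) ℙ {y | ∀ i, y i ∈ closedBall (y 0) (2 * r)} :=
        (measure_mono hevent).trans
          (Measure.le_map_apply (measurable_pi_lambda _ hX_meas).aemeasurable _)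
    _ ≤ ENNReal.ofReal (fmax * unitBallVol d * (2 * r) ^ d) ^ m := by
        rw [hX_joint]
        exact measure_pi_forall_mem_closedBall_le μ fun x =>
          withDensity_closedBall_le hfmax x (by positivity)
    _ = _ := by
        rw [← ENNReal.ofReal_pow (by positivity), Nat.add_sub_cancel,
          pow_mul]
        ring_nf

/-- Lemma 5.1: for `X_1, …, X_k` i.i.d. with density `f ≤ f_max`, the probability that
all of them lie in some ball of radius `r` is at most
`(f_max ω_d 2^d)^{k-1} r^{d(k-1)}`. -/
theorem points_in_ball
    (d k : ℕ) (hd : 1 ≤ d) (hk : 1 ≤ k)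
    (Ω : Type*) [MeasureSpace Ω] [IsProbabilityMeasure (ℙ : Measure Ω)]
    (f : EuclideanSpace ℝ (Fin d) → ℝ)
    (hf_meas : Measurable f) (hf_nonneg : ∀ x, 0 ≤ f x)
    (hf_prob : ∫ x, f x = 1)
    (fmax : ℝ) (hfmax : ∀ x, f x ≤ fmax)
    (X : Fin k → Ω → EuclideanSpace ℝ (Fin d))
    (hX_meas : ∀ i, Measurable (X i))
    (hX_indep : iIndepFun X ℙ)
    (hX_law : ∀ i, Measure.map (X i) ℙ =
      volume.withDensity fun x => ENNReal.ofReal (f x))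
    (r : ℝ) (hr : 0 < r) :
    ℙ {ω | ∃ c : EuclideanSpace ℝ (Fin d), ∀ i : Fin k, X i ω ∈ Metric.closedBall c r} ≤
      ENNReal.ofReal ((fmax * unitBallVol d * 2 ^ d) ^ (k - 1) * r ^ (d * (k - 1))) :=
  points_in_ball_general d k Ω f hf_nonneg fmax hfmax X hX_meas hX_indep hX_law r hr
end
end
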